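/- Suppose λ ∈ R^d is a vector whose coordinates take at most two consecutive integer values. Then there exist unique integers l and a with −d/2 ≤ l < d/2 such that λ is, up to a permutation of coordinates, equal to [1^l, 0^{d−|l|}] + (a/n)·j, where n = d − k is fixed, and [1^l, 0^{d−|l|}] for negative l denotes the vector with |l| entries equal to −1 and d−|l| entries equal to 0. -/

import Mathlib

/-!
Write `m` for the number of coordinates of `λ` equal to `b + 1`. Up to a permutation, `λ` is
`[1^m, 0^{d-m}] + b·j`, and also `[1^{m-d}, 0^{m}] + (b+1)·j` (with `m - d ≤ 0`); the window
`-d/2 ≤ l < d/2` selects the first form when `2m < d` and the second otherwise. Conversely, if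
`λ` is a permutation of `[1^l, 0^{d-|l|}] + c·j` with `|l| < d`, then `c` is one of the coordinates
of `λ`, so `c ∈ {b, b+1}`, and comparing coordinate sums, `l + d c = d b + m`, pins down `l`.
-/

/-- The vector `[1^l, 0^{d-|l|}] + (a/n)·j`: for `l ≥ 0` it has `l` entries `1`,
for `l < 0` it has `|l|` entries `-1`, the rest `0`, shifted by `a/n` in each entry. -/
noncomputable def stmt5vec (d : ℕ) (n : ℕ) (l a : ℤ) : Fin d → ℝ :=
  fun i => (if (i : ℕ) < l.natAbs then (if 0 ≤ l then 1 else -1) else 0) + (a : ℝ) / n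

lemma Equiv.Perm.exists_comp_eq_ite {ι α : Type*} [Fintype ι] [DecidableEq α] {f : ι → α}
    {x y : α} (hf : ∀ i, f i = x ∨ f i = y) (p : ι → Prop) [DecidablePred p]
    (hp : Fintype.card {i // p i} = Fintype.card {i // f i = x}) :
    ∃ σ : Equiv.Perm ι, f ∘ σ = fun i => if p i then x else y := by
  have hp' : Fintype.card {i // ¬p i} = Fintype.card {i // ¬f i = x} := by
    rw [Fintype.card_subtype_compl, Fintype.card_subtype_compl, hp]
  refine ⟨Equiv.subtypeCongr (Fintype.equivOfCardEq hp) (Fintype.equivOfCardEq hp'),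
    funext fun i => ?_⟩
  by_cases h : p i
  · simpa [Equiv.subtypeCongr, h] using ((Fintype.equivOfCardEq hp) ⟨i, h⟩).2
  · have hne := ((Fintype.equivOfCardEq hp') ⟨i, h⟩).2
    simpa [Equiv.subtypeCongr, h, hne] using hf ((Fintype.equivOfCardEq hp') ⟨i, h⟩)

lemma sum_eq_card_mul_add_card {ι : Type*} [Fintype ι] {f : ι → ℝ} {b : ℝ}
    (hf : ∀ i, f i = b ∨ f i = b + 1) :
    ∑ i, f i = Fintype.card ι * b + Fintype.card {i // f i = b + 1} := by
  have hf' : ∀ i, f i = b + if f i = b + 1 then 1 else 0 := by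
    intro i
    rcases hf i with h | h <;> simp [h]
  rw [Finset.sum_congr rfl fun i _ => hf' i]
  simp [Finset.sum_add_distrib, Fintype.card_subtype]

lemma Fintype.card_subtype_fin_val_lt {d m : ℕ} (h : m ≤ d) :
    Fintype.card {i : Fin d // (i : ℕ) < m} = m := by
  rw [Fintype.card_subtype, Fin.card_filter_val_lt, min_eq_right h]

section stmt5vec

variable {d n : ℕ}

lemma stmt5vec_natAbs {l : ℤ} (a : ℤ) (hl : l.natAbs < d) :
    stmt5vec d n l a ⟨l.natAbs, hl⟩ = a / n := by
  simp [stmt5vec]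

lemma sum_stmt5vec {l : ℤ} (a : ℤ) (hl : l.natAbs ≤ d) :
    ∑ i, stmt5vec d n l a i = l + d * (a / n) := by
  have hsign : (if 0 ≤ l then |(l : ℝ)| else -|(l : ℝ)|) = l := by
    split_ifs with h
    · exact abs_of_nonneg (by exact_mod_cast h)
    · exact neg_eq_iff_eq_neg.mpr (abs_of_neg (by exact_mod_cast not_le.mp h))
  simpa [stmt5vec, Finset.sum_add_distrib, Finset.sum_ite, Fin.card_filter_val_lt, hl]

lemma stmt5vec_natCast_mul (hn : n ≠ 0) (m : ℕ) (b : ℤ) :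
    stmt5vec d n m (n * b) = fun i : Fin d => if (i : ℕ) < m then (b : ℝ) + 1 else b := by
  ext i
  simp [stmt5vec, hn]
  split_ifs <;> ring

lemma stmt5vec_sub_mul (hn : n ≠ 0) {m : ℕ} (hm : m ≤ d) (b : ℤ) :
    stmt5vec d n (m - d) (n * (b + 1)) =
      fun i : Fin d => if ¬(i : ℕ) < d - m then (b : ℝ) + 1 else b := by
  have hnatAbs : ((m : ℤ) - d).natAbs = d - m := by omega
  ext i
  by_cases hi : (i : ℕ) < d - m
  · have hneg : ¬ d ≤ m := by omega
    simp [stmt5vec, hn, hnatAbs, hi, hneg]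
  · simp [stmt5vec, hn, hnatAbs, hi]

variable {lam : Fin d → ℝ} {b : ℤ} {m : ℕ} (hn : n ≠ 0)
  (hlam : ∀ i, lam i = b ∨ lam i = b + 1) (hm : Fintype.card {i // lam i = b + 1} = m)
include hn hlam hm

lemma exists_comp_perm_eq_stmt5vec_natCast (hmd : m ≤ d) :
    ∃ σ : Equiv.Perm (Fin d), lam ∘ σ = stmt5vec d n m (n * b) := by
  rw [stmt5vec_natCast_mul hn]
  exact Equiv.Perm.exists_comp_eq_ite (fun i => (hlam i).symm) _
    ((Fintype.card_subtype_fin_val_lt hmd).trans hm.symm)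

lemma exists_comp_perm_eq_stmt5vec_sub (hmd : m ≤ d) :
    ∃ σ : Equiv.Perm (Fin d), lam ∘ σ = stmt5vec d n (m - d) (n * (b + 1)) := by
  rw [stmt5vec_sub_mul hn hmd]
  refine Equiv.Perm.exists_comp_eq_ite (fun i => (hlam i).symm) _ ?_
  rw [Fintype.card_subtype_compl, Fintype.card_subtype_fin_val_lt (Nat.sub_le d m),
    Fintype.card_fin, hm]
  omega

end stmt5vec

lemma natAbs_lt_of_neg_half_le_of_lt_half {d : ℕ} {l : ℤ} (h₁ : -(d : ℝ) / 2 ≤ l)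
    (h₂ : (l : ℝ) < d / 2) : l.natAbs < d := by
  have h₁' : -(d : ℤ) < l := by exact_mod_cast (by linarith : -(d : ℝ) < l)
  have h₂' : l < d := by exact_mod_cast (by linarith : (l : ℝ) < d)
  omega

lemma eq_or_eq_of_comp_perm_eq_stmt5vec {d n : ℕ} (hn : n ≠ 0) {lam : Fin d → ℝ} {b : ℝ}
    (hlam : ∀ i, lam i = b ∨ lam i = b + 1) {l a : ℤ} (hl : l.natAbs < d)
    {σ : Equiv.Perm (Fin d)} (hσ : lam ∘ σ = stmt5vec d n l a) {m : ℕ}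
    (hm : Fintype.card {i // lam i = b + 1} = m) :
    (a = n * b ∧ (l : ℝ) = m) ∨ (a = n * (b + 1) ∧ (l : ℝ) = m - d) := by
  have hsum : (l : ℝ) + d * (a / n) = d * b + m := by
    rw [← sum_stmt5vec a hl.le, ← hσ]
    simp only [Function.comp_apply]
    rw [Equiv.sum_comp σ lam, sum_eq_card_mul_add_card hlam, Fintype.card_fin, hm]
  have hval : lam (σ ⟨l.natAbs, hl⟩) = a / n := by
    rw [← stmt5vec_natAbs a hl, ← hσ, Function.comp_apply]
  have hnR : (n : ℝ) ≠ 0 := by exact_mod_cast hn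
  rcases hlam (σ ⟨l.natAbs, hl⟩) with h | h <;> rw [hval] at h <;> rw [h] at hsum
  · exact Or.inl ⟨by rw [← h, mul_div_cancel₀ _ hnR], by linarith⟩
  · exact Or.inr ⟨by rw [← h, mul_div_cancel₀ _ hnR], by linarith⟩

theorem stmt5_general (d : ℕ) (hd : 1 ≤ d) (n : ℕ) (hn1 : 1 ≤ n)
    (lam : Fin d → ℝ) (b : ℤ) (hlam : ∀ i, lam i = b ∨ lam i = b + 1) :
    ∃! p : ℤ × ℤ,
      (-(d : ℝ) / 2 ≤ p.1 ∧ (p.1 : ℝ) < (d : ℝ) / 2) ∧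
      ∃ σ : Equiv.Perm (Fin d), lam ∘ σ = stmt5vec d n p.1 p.2 := by
  obtain ⟨m, hm⟩ : ∃ m, Fintype.card {i // lam i = b + 1} = m := ⟨_, rfl⟩
  have hn : n ≠ 0 := by omega
  have hmd : m ≤ d := hm ▸ (Fintype.card_subtype_le _).trans (Fintype.card_fin d).le
  have hdR : (1 : ℝ) ≤ d := by exact_mod_cast hd
  have hmR : (m : ℝ) ≤ d := by exact_mod_cast hmd
  rcases lt_or_ge (2 * m) d with h | h
  · have hR : 2 * (m : ℝ) < d := by exact_mod_cast h
    refine ⟨(m, n * b), ⟨⟨by push_cast; linarith, by push_cast; linarith⟩, ?_⟩, ?_⟩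
    · exact exists_comp_perm_eq_stmt5vec_natCast hn hlam hm hmd
    · rintro ⟨l, a⟩ ⟨⟨hl₁, hl₂⟩, σ, hσ⟩
      rcases eq_or_eq_of_comp_perm_eq_stmt5vec hn hlam
        (natAbs_lt_of_neg_half_le_of_lt_half hl₁ hl₂) hσ hm with ⟨ha, hl⟩ | ⟨-, hl⟩
      · exact Prod.ext (by exact_mod_cast hl) (by exact_mod_cast ha)
      · simp only at hl₁; linarith
  · have hR : (d : ℝ) ≤ 2 * m := by exact_mod_cast h
    refine ⟨(m - d, n * (b + 1)), ⟨⟨by push_cast; linarith, by push_cast; linarith⟩, ?_⟩, ?_⟩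
    · exact exists_comp_perm_eq_stmt5vec_sub hn hlam hm hmd
    · rintro ⟨l, a⟩ ⟨⟨hl₁, hl₂⟩, σ, hσ⟩
      rcases eq_or_eq_of_comp_perm_eq_stmt5vec hn hlam
        (natAbs_lt_of_neg_half_le_of_lt_half hl₁ hl₂) hσ hm with ⟨-, hl⟩ | ⟨ha, hl⟩
      · simp only at hl₂; linarith
      · exact Prod.ext (by exact_mod_cast hl) (by exact_mod_cast ha)

/-- A vector in `ℝ^d` whose coordinates take at most two consecutive
integer values is, up to permutation of coordinates, uniquely of the form
`[1^l, 0^{d-|l|}] + (a/n)·j` with `-d/2 ≤ l < d/2`, `l, a ∈ ℤ`. -/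
theorem stmt5 (d k : ℕ) (hd : 1 ≤ d) (n : ℕ) (hn : n = d - k) (hn1 : 1 ≤ n)
    (lam : Fin d → ℝ) (b : ℤ) (hlam : ∀ i, lam i = b ∨ lam i = b + 1) :
    ∃! p : ℤ × ℤ,
      (-(d : ℝ) / 2 ≤ p.1 ∧ (p.1 : ℝ) < (d : ℝ) / 2) ∧
      ∃ σ : Equiv.Perm (Fin d), lam ∘ σ = stmt5vec d n p.1 p.2 :=
  stmt5_general d hd n hn1 lam b hlam
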